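/- Let N = 2, α > 0, and let H^1, H^2 be independent random variables, exponentially distributed with rates λ_1, λ_2 > 0. Define T: (0,∞)^2 → [0,∞)^2 by T(u)^n = E[H^n · 1{H^n/(u^n)^α ≥ H^m/(u^m)^α}] (m ≠ n). Then T has at least one fixed point u* with u*^1 > 0 and u*^2 > 0. -/

import Mathlib

open Real MeasureTheory ProbabilityTheory

open Set
open scoped ENNReal NNReal

lemma aux_expMeasure_Iic {r x : ℝ} (hr : 0 < r) (hx : 0 ≤ x) :
    expMeasure r (Iic x) = ENNReal.ofReal (1 - Real.exp (-(r * x))) := by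
  haveI := isProbabilityMeasure_expMeasure hr
  rw [← ofReal_cdf]
  rw [cdf_expMeasure_eq hr, if_pos hx]

lemma aux_expMeasure_Iic_pos {r x : ℝ} (hr : 0 < r) (hx : 0 < x) :
    0 < expMeasure r (Iic x) := by
  rw [aux_expMeasure_Iic hr hx.le]
  rw [ENNReal.ofReal_pos]
  have : Real.exp (-(r * x)) < 1 := Real.exp_lt_one_iff.2 (by nlinarith)
  linarith

lemma aux_expMeasure_Iic_zero {r : ℝ} (hr : 0 < r) : expMeasure r (Iic 0) = 0 := by
  rw [aux_expMeasure_Iic hr le_rfl]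
  simp

lemma aux_expMeasure_Ici_pos {r : ℝ} (hr : 0 < r) : 0 < expMeasure r (Ici 1) := by
  haveI := isProbabilityMeasure_expMeasure hr
  by_contra h
  push_neg at h
  have h0 : expMeasure r (Ici 1) = 0 := le_antisymm h zero_le
  have h1 : (1 : ℝ≥0∞) ≤ expMeasure r (Iio 1) + expMeasure r (Ici 1) := by
    have := measure_union_le (μ := expMeasure r) (Iio 1) (Ici 1)
    rwa [Iio_union_Ici, measure_univ] at this
  rw [h0, add_zero] at h1
  have h2 : expMeasure r (Iio 1) ≤ expMeasure r (Iic 1) := measure_mono Iio_subset_Iic_self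
  have h3 : expMeasure r (Iic 1) < 1 := by
    rw [aux_expMeasure_Iic hr zero_le_one]
    exact ENNReal.ofReal_lt_one.2 (by have := Real.exp_pos (-(r * 1)); linarith)
  exact absurd (lt_of_le_of_lt (h1.trans h2) h3) (lt_irrefl _)

lemma aux_expMeasure_singleton {r : ℝ} (a : ℝ) : expMeasure r {a} = 0 := by
  have : expMeasure r = volume.withDensity (gammaPDF 1 r) := rfl
  rw [this]
  exact (withDensity_absolutelyContinuous volume _) (measure_singleton a)

lemma aux_integrable_id_expMeasure {r : ℝ} (hr : 0 < r) : Integrable id (expMeasure r) := by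
  have hmeas : Measurable (exponentialPDF r) :=
    (measurable_exponentialPDFReal r).ennreal_ofReal
  have : expMeasure r = volume.withDensity (exponentialPDF r) := rfl
  rw [this, integrable_withDensity_iff hmeas (ae_of_all _ fun x => ENNReal.ofReal_lt_top)]
  have heq : (fun x : ℝ => id x * (exponentialPDF r x).toReal)
      = (Ioi (0:ℝ)).indicator (fun x => r * (x ^ (1:ℝ) * Real.exp (-r * x ^ (1:ℝ)))) := by
    funext x
    simp only [id, indicator_apply, mem_Ioi]
    rw [exponentialPDF_eq, ENNReal.toReal_ofReal_eq_iff.2]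
    · by_cases hx : 0 < x
      · rw [if_pos hx, if_pos hx.le, Real.rpow_one]
        ring_nf
      · rw [if_neg hx]
        rcases eq_or_lt_of_le (not_lt.1 hx) with h | h
        · subst h; simp
        · rw [if_neg (by linarith), mul_zero]
    · split_ifs with h
      · positivity
      · exact le_rfl
  rw [heq, integrable_indicator_iff measurableSet_Ioi]
  exact (integrableOn_rpow_mul_exp_neg_mul_rpow (by norm_num) one_pos hr).const_mul r

/-- For two independent exponential channels, the α-fair utility map
`T(u)ⁿ = E[Hⁿ · 1{Hⁿ/(uⁿ)^α ≥ Hᵐ/(uᵐ)^α}]` has at least one strictly positive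
fixed point. -/
theorem alphaFair_exponential_fixedPoint_exists
    {Ω : Type*} [MeasurableSpace Ω] (μ : Measure Ω) [IsProbabilityMeasure μ]
    (α : ℝ) (hα : 0 < α) (lam₁ lam₂ : ℝ) (hlam₁ : 0 < lam₁) (hlam₂ : 0 < lam₂)
    (H₁ H₂ : Ω → ℝ) (hH₁ : Measurable H₁) (hH₂ : Measurable H₂)
    (hindep : IndepFun H₁ H₂ μ)
    (hd₁ : Measure.map H₁ μ = expMeasure lam₁)
    (hd₂ : Measure.map H₂ μ = expMeasure lam₂) :
    ∃ u : Fin 2 → ℝ, 0 < u 0 ∧ 0 < u 1 ∧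
      u 0 = ∫ ω, H₁ ω *
        (if H₂ ω / (u 1) ^ α ≤ H₁ ω / (u 0) ^ α then (1 : ℝ) else 0) ∂μ ∧
      u 1 = ∫ ω, H₂ ω *
        (if H₁ ω / (u 0) ^ α ≤ H₂ ω / (u 1) ^ α then (1 : ℝ) else 0) ∂μ := by
  haveI P1 : IsProbabilityMeasure (expMeasure lam₁) := isProbabilityMeasure_expMeasure hlam₁
  haveI P2 : IsProbabilityMeasure (expMeasure lam₂) := isProbabilityMeasure_expMeasure hlam₂
  -- integrability of H₁, H₂
  have intH₁ : Integrable H₁ μ := by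
    have h := (integrable_map_measure (μ := μ) (f := H₁) (g := id)
      aestronglyMeasurable_id hH₁.aemeasurable).1
    rw [hd₁] at h
    simpa [Function.id_comp] using h (aux_integrable_id_expMeasure hlam₁)
  have intH₂ : Integrable H₂ μ := by
    have h := (integrable_map_measure (μ := μ) (f := H₂) (g := id)
      aestronglyMeasurable_id hH₂.aemeasurable).1
    rw [hd₂] at h
    simpa [Function.id_comp] using h (aux_integrable_id_expMeasure hlam₂)
  -- a.e. positivity
  have hpos₁ : ∀ᵐ ω ∂μ, 0 < H₁ ω := by
    have h0 : μ (H₁ ⁻¹' (Iic 0)) = 0 := by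
      rw [← Measure.map_apply hH₁ measurableSet_Iic, hd₁, aux_expMeasure_Iic_zero hlam₁]
    rw [ae_iff]
    convert h0 using 2
    ext ω; simp [not_lt]
  have hpos₂ : ∀ᵐ ω ∂μ, 0 < H₂ ω := by
    have h0 : μ (H₂ ⁻¹' (Iic 0)) = 0 := by
      rw [← Measure.map_apply hH₂ measurableSet_Iic, hd₂, aux_expMeasure_Iic_zero hlam₂]
    rw [ae_iff]
    convert h0 using 2
    ext ω; simp [not_lt]
  -- the two one-parameter integrands
  set F₁ : ℝ → Ω → ℝ := fun r ω => H₁ ω * (if H₂ ω ≤ r * H₁ ω then 1 else 0) with hF₁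
  set F₂ : ℝ → Ω → ℝ := fun r ω => H₂ ω * (if r * H₁ ω ≤ H₂ ω then 1 else 0) with hF₂
  have meas₁ : ∀ r : ℝ, Measurable (F₁ r) := fun r =>
    hH₁.mul (Measurable.ite (measurableSet_le hH₂ (hH₁.const_mul r))
      measurable_const measurable_const)
  have meas₂ : ∀ r : ℝ, Measurable (F₂ r) := fun r =>
    hH₂.mul (Measurable.ite (measurableSet_le (hH₁.const_mul r) hH₂)
      measurable_const measurable_const)
  have bnd₁ : ∀ r : ℝ, ∀ ω, ‖F₁ r ω‖ ≤ ‖H₁ ω‖ := by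
    intro r ω
    rw [hF₁]
    simp only [norm_mul]
    have : ‖if H₂ ω ≤ r * H₁ ω then (1:ℝ) else 0‖ ≤ 1 := by split_ifs <;> simp
    calc ‖H₁ ω‖ * ‖if H₂ ω ≤ r * H₁ ω then (1:ℝ) else 0‖ ≤ ‖H₁ ω‖ * 1 :=
          mul_le_mul_of_nonneg_left this (norm_nonneg _)
      _ = ‖H₁ ω‖ := mul_one _
  have bnd₂ : ∀ r : ℝ, ∀ ω, ‖F₂ r ω‖ ≤ ‖H₂ ω‖ := by
    intro r ω
    rw [hF₂]
    simp only [norm_mul]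
    have : ‖if r * H₁ ω ≤ H₂ ω then (1:ℝ) else 0‖ ≤ 1 := by split_ifs <;> simp
    calc ‖H₂ ω‖ * ‖if r * H₁ ω ≤ H₂ ω then (1:ℝ) else 0‖ ≤ ‖H₂ ω‖ * 1 :=
          mul_le_mul_of_nonneg_left this (norm_nonneg _)
      _ = ‖H₂ ω‖ := mul_one _
  have int₁ : ∀ r : ℝ, Integrable (F₁ r) μ := fun r =>
    intH₁.norm.mono' (meas₁ r).aestronglyMeasurable (ae_of_all _ (bnd₁ r))
  have int₂ : ∀ r : ℝ, Integrable (F₂ r) μ := fun r =>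
    intH₂.norm.mono' (meas₂ r).aestronglyMeasurable (ae_of_all _ (bnd₂ r))
  set G₁ : ℝ → ℝ := fun r => ∫ ω, F₁ r ω ∂μ with hG₁
  set G₂ : ℝ → ℝ := fun r => ∫ ω, F₂ r ω ∂μ with hG₂
  -- monotonicity
  have hmono₁ : ∀ {r s : ℝ}, r ≤ s → G₁ r ≤ G₁ s := by
    intro r s hrs
    refine integral_mono_ae (int₁ r) (int₁ s) (hpos₁.mono fun ω h0 => ?_)
    simp only [hF₁]
    refine mul_le_mul_of_nonneg_left ?_ h0.le
    split_ifs with h1 h2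
    · exact le_rfl
    · exact absurd (h1.trans (by nlinarith)) h2
    · norm_num
    · exact le_rfl
  have hmono₂ : ∀ {r s : ℝ}, r ≤ s → G₂ s ≤ G₂ r := by
    intro r s hrs
    refine integral_mono_ae (int₂ s) (int₂ r) ((hpos₁.and hpos₂).mono fun ω h0 => ?_)
    simp only [hF₂]
    refine mul_le_mul_of_nonneg_left ?_ h0.2.le
    split_ifs with h1 h2
    · exact le_rfl
    · exact absurd ((by nlinarith : r * H₁ ω ≤ s * H₁ ω).trans h1) h2
    · norm_num
    · exact le_rfl
  -- upper bounds
  have hub₁ : ∀ r : ℝ, G₁ r ≤ ∫ ω, H₁ ω ∂μ := by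
    intro r
    refine integral_mono_ae (int₁ r) intH₁ (hpos₁.mono fun ω h0 => ?_)
    simp only [hF₁]
    nlinarith [le_refl (H₁ ω), (by split_ifs <;> norm_num :
      (if H₂ ω ≤ r * H₁ ω then (1:ℝ) else 0) ≤ 1),
      (by split_ifs <;> norm_num : (0:ℝ) ≤ if H₂ ω ≤ r * H₁ ω then (1:ℝ) else 0)]
  have hub₂ : ∀ r : ℝ, G₂ r ≤ ∫ ω, H₂ ω ∂μ := by
    intro r
    refine integral_mono_ae (int₂ r) intH₂ (hpos₂.mono fun ω h0 => ?_)
    simp only [hF₂]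
    nlinarith [(by split_ifs <;> norm_num :
      (if r * H₁ ω ≤ H₂ ω then (1:ℝ) else 0) ≤ 1),
      (by split_ifs <;> norm_num : (0:ℝ) ≤ if r * H₁ ω ≤ H₂ ω then (1:ℝ) else 0)]
  -- positivity
  have prepos₁ : ∀ (s : Set ℝ), MeasurableSet s → 0 < expMeasure lam₁ s → 0 < μ (H₁ ⁻¹' s) := by
    intro s hs h
    rwa [← Measure.map_apply hH₁ hs, hd₁]
  have prepos₂ : ∀ (s : Set ℝ), MeasurableSet s → 0 < expMeasure lam₂ s → 0 < μ (H₂ ⁻¹' s) := by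
    intro s hs h
    rwa [← Measure.map_apply hH₂ hs, hd₂]
  have hGpos₁ : ∀ {r : ℝ}, 0 < r → 0 < G₁ r := by
    intro r hr
    set A : Set Ω := H₁ ⁻¹' (Ici 1) ∩ H₂ ⁻¹' (Iic r) with hA
    have hAm : MeasurableSet A := (hH₁ measurableSet_Ici).inter (hH₂ measurableSet_Iic)
    have hmuA : 0 < μ A := by
      rw [hA, hindep.measure_inter_preimage_eq_mul _ _ measurableSet_Ici measurableSet_Iic]
      exact ENNReal.mul_pos (prepos₁ _ measurableSet_Ici (aux_expMeasure_Ici_pos hlam₁)).ne'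
        (prepos₂ _ measurableSet_Iic (aux_expMeasure_Iic_pos hlam₂ hr)).ne'
    have key : ∫ ω, A.indicator (1 : Ω → ℝ) ω ∂μ ≤ G₁ r := by
      refine integral_mono_ae ((integrable_const (1:ℝ)).indicator hAm) (int₁ r)
        (hpos₁.mono fun ω h0 => ?_)
      by_cases hω : ω ∈ A
      · rw [indicator_of_mem hω]
        simp only [Pi.one_apply]
        have h1 : (1:ℝ) ≤ H₁ ω := hω.1
        have h2 : H₂ ω ≤ r := hω.2
        have : H₂ ω ≤ r * H₁ ω := h2.trans (by nlinarith)
        simp only [hF₁, if_pos this, mul_one]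
        exact h1
      · rw [indicator_of_notMem hω]
        simp only [hF₁]
        split_ifs <;> nlinarith
    have : (0:ℝ) < ∫ ω, A.indicator (1 : Ω → ℝ) ω ∂μ := by
      rw [integral_indicator_one hAm]
      exact ENNReal.toReal_pos hmuA.ne' (measure_ne_top μ A)
    linarith
  have hGpos₂ : ∀ {r : ℝ}, 0 < r → 0 < G₂ r := by
    intro r hr
    set A : Set Ω := H₁ ⁻¹' (Iic (1/r)) ∩ H₂ ⁻¹' (Ici 1) with hA
    have hAm : MeasurableSet A := (hH₁ measurableSet_Iic).inter (hH₂ measurableSet_Ici)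
    have hmuA : 0 < μ A := by
      rw [hA, hindep.measure_inter_preimage_eq_mul _ _ measurableSet_Iic measurableSet_Ici]
      exact ENNReal.mul_pos
        (prepos₁ _ measurableSet_Iic (aux_expMeasure_Iic_pos hlam₁ (by positivity))).ne'
        (prepos₂ _ measurableSet_Ici (aux_expMeasure_Ici_pos hlam₂)).ne'
    have key : ∫ ω, A.indicator (1 : Ω → ℝ) ω ∂μ ≤ G₂ r := by
      refine integral_mono_ae ((integrable_const (1:ℝ)).indicator hAm) (int₂ r)
        (hpos₂.mono fun ω h0 => ?_)
      by_cases hω : ω ∈ A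
      · rw [indicator_of_mem hω]
        simp only [Pi.one_apply]
        have h1 : H₁ ω ≤ 1/r := hω.1
        have h2 : (1:ℝ) ≤ H₂ ω := hω.2
        have : r * H₁ ω ≤ H₂ ω := by
          have : r * H₁ ω ≤ r * (1/r) := by nlinarith
          rw [mul_one_div, div_self hr.ne'] at this
          linarith
        simp only [hF₂, if_pos this, mul_one]
        exact h2
      · rw [indicator_of_notMem hω]
        simp only [hF₂]
        split_ifs <;> nlinarith
    have : (0:ℝ) < ∫ ω, A.indicator (1 : Ω → ℝ) ω ∂μ := by
      rw [integral_indicator_one hAm]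
      exact ENNReal.toReal_pos hmuA.ne' (measure_ne_top μ A)
    linarith
  -- the diagonal is null
  have hnull : ∀ r : ℝ, μ {ω | H₂ ω = r * H₁ ω} = 0 := by
    intro r
    have hjoint : Measure.map (fun ω => (H₁ ω, H₂ ω)) μ
        = (expMeasure lam₁).prod (expMeasure lam₂) := by
      rw [← hd₁, ← hd₂]
      exact (indepFun_iff_map_prod_eq_prod_map_map hH₁.aemeasurable hH₂.aemeasurable).1 hindep
    have hset : MeasurableSet {p : ℝ × ℝ | p.2 = r * p.1} :=
      measurableSet_eq_fun measurable_snd (measurable_fst.const_mul r)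
    have hpre : {ω | H₂ ω = r * H₁ ω}
        = (fun ω => (H₁ ω, H₂ ω)) ⁻¹' {p : ℝ × ℝ | p.2 = r * p.1} := rfl
    rw [hpre, ← Measure.map_apply (hH₁.prodMk hH₂) hset, hjoint, Measure.prod_apply hset]
    have hsec : ∀ x : ℝ, (Prod.mk x ⁻¹' {p : ℝ × ℝ | p.2 = r * p.1}) = {r * x} := by
      intro x; ext y; simp [Set.mem_singleton_iff]
    simp only [hsec, aux_expMeasure_singleton, lintegral_const, zero_mul]
  -- continuity
  have contmul : ∀ (c r₀ : ℝ), ContinuousAt (fun r : ℝ => r * c) r₀ := fun c r₀ =>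
    (continuous_id.mul continuous_const).continuousAt
  have hcont₁ : ∀ (r₀ : ℝ), ContinuousAt G₁ r₀ := by
    intro r₀
    refine continuousAt_of_dominated (Filter.Eventually.of_forall fun r =>
      (meas₁ r).aestronglyMeasurable) (Filter.Eventually.of_forall fun r =>
      ae_of_all _ (bnd₁ r)) intH₁.norm ?_
    have hne : ∀ᵐ ω ∂μ, H₂ ω ≠ r₀ * H₁ ω := by
      rw [ae_iff]
      simpa using hnull r₀
    filter_upwards [hne] with ω hω
    rcases lt_or_gt_of_ne hω with h | h
    · have hev : (fun r => F₁ r ω) =ᶠ[nhds r₀] fun _ => H₁ ω := by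
        filter_upwards [continuousAt_const.eventually_lt (contmul (H₁ ω) r₀) h] with r hr
        simp only [hF₁, if_pos hr.le, mul_one]
      exact continuousAt_const.congr hev.symm
    · have hev : (fun r => F₁ r ω) =ᶠ[nhds r₀] fun _ => (0:ℝ) := by
        filter_upwards [(contmul (H₁ ω) r₀).eventually_lt continuousAt_const h] with r hr
        simp only [hF₁, if_neg (not_le.2 hr), mul_zero]
      exact continuousAt_const.congr hev.symm
  have hcont₂ : ∀ (r₀ : ℝ), ContinuousAt G₂ r₀ := by
    intro r₀
    refine continuousAt_of_dominated (Filter.Eventually.of_forall fun r =>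
      (meas₂ r).aestronglyMeasurable) (Filter.Eventually.of_forall fun r =>
      ae_of_all _ (bnd₂ r)) intH₂.norm ?_
    have hne : ∀ᵐ ω ∂μ, H₂ ω ≠ r₀ * H₁ ω := by
      rw [ae_iff]
      simpa using hnull r₀
    filter_upwards [hne] with ω hω
    rcases lt_or_gt_of_ne hω with h | h
    · have hev : (fun r => F₂ r ω) =ᶠ[nhds r₀] fun _ => (0:ℝ) := by
        filter_upwards [continuousAt_const.eventually_lt (contmul (H₁ ω) r₀) h] with r hr
        simp only [hF₂, if_neg (not_le.2 hr), mul_zero]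
      exact continuousAt_const.congr hev.symm
    · have hev : (fun r => F₂ r ω) =ᶠ[nhds r₀] fun _ => H₂ ω := by
        filter_upwards [(contmul (H₁ ω) r₀).eventually_lt continuousAt_const h] with r hr
        simp only [hF₂, if_pos hr.le, mul_one]
      exact continuousAt_const.congr hev.symm
  -- the function for the intermediate value theorem
  set ψ : ℝ → ℝ := fun r => r * (G₁ r) ^ α - (G₂ r) ^ α with hψ
  have hcontψ : ∀ (r₀ : ℝ), ContinuousAt ψ r₀ := by
    intro r₀
    refine ContinuousAt.sub (ContinuousAt.mul continuousAt_id ?_) ?_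
    · exact (Real.continuousAt_rpow_const _ _ (Or.inr hα.le)).comp (hcont₁ r₀)
    · exact (Real.continuousAt_rpow_const _ _ (Or.inr hα.le)).comp (hcont₂ r₀)
  set m₁ : ℝ := ∫ ω, H₁ ω ∂μ with hm₁
  set m₂ : ℝ := ∫ ω, H₂ ω ∂μ with hm₂
  have hm₁pos : 0 < m₁ := lt_of_lt_of_le (hGpos₁ one_pos) (hub₁ 1)
  have hm₂pos : 0 < m₂ := lt_of_lt_of_le (hGpos₂ one_pos) (hub₂ 1)
  set a : ℝ := min 1 ((G₂ 1) ^ α / (2 * m₁ ^ α)) with ha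
  have hapos : 0 < a := by
    apply lt_min one_pos
    have := hGpos₂ one_pos
    positivity
  have ha1 : a ≤ 1 := min_le_left _ _
  set b : ℝ := max 1 ((m₂ ^ α + 1) / (G₁ 1) ^ α) with hb
  have hb1 : (1:ℝ) ≤ b := le_max_left _ _
  have hψa : ψ a ≤ 0 := by
    have h1 : (G₁ a) ^ α ≤ m₁ ^ α :=
      Real.rpow_le_rpow (hGpos₁ hapos).le (hub₁ a) hα.le
    have h2 : (G₂ 1) ^ α ≤ (G₂ a) ^ α :=
      Real.rpow_le_rpow (hGpos₂ one_pos).le (hmono₂ ha1) hα.le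
    have h3 : a * (G₁ a) ^ α ≤ a * m₁ ^ α :=
      mul_le_mul_of_nonneg_left h1 hapos.le
    have h4 : a * m₁ ^ α ≤ ((G₂ 1) ^ α / (2 * m₁ ^ α)) * m₁ ^ α := by
      have hma : (0:ℝ) < m₁ ^ α := Real.rpow_pos_of_pos hm₁pos α
      exact mul_le_mul_of_nonneg_right (min_le_right _ _) hma.le
    have h5 : ((G₂ 1) ^ α / (2 * m₁ ^ α)) * m₁ ^ α = (G₂ 1) ^ α / 2 := by
      have hma : (m₁:ℝ) ^ α ≠ 0 := (Real.rpow_pos_of_pos hm₁pos α).ne'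
      field_simp
    have h6 : (0:ℝ) < (G₂ 1) ^ α := Real.rpow_pos_of_pos (hGpos₂ one_pos) α
    simp only [hψ]
    linarith
  have hψb : 0 ≤ ψ b := by
    have hbpos : (0:ℝ) < b := lt_of_lt_of_le one_pos hb1
    have h1 : (G₁ 1) ^ α ≤ (G₁ b) ^ α :=
      Real.rpow_le_rpow (hGpos₁ one_pos).le (hmono₁ hb1) hα.le
    have h2 : (G₂ b) ^ α ≤ m₂ ^ α :=
      Real.rpow_le_rpow (hGpos₂ hbpos).le (hub₂ b) hα.le
    have hg1 : (0:ℝ) < (G₁ 1) ^ α := Real.rpow_pos_of_pos (hGpos₁ one_pos) α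
    have h3 : (m₂ ^ α + 1) / (G₁ 1) ^ α * (G₁ 1) ^ α = m₂ ^ α + 1 := by
      field_simp
    have h4 : m₂ ^ α + 1 ≤ b * (G₁ 1) ^ α := by
      calc m₂ ^ α + 1 = (m₂ ^ α + 1) / (G₁ 1) ^ α * (G₁ 1) ^ α := h3.symm
        _ ≤ b * (G₁ 1) ^ α := mul_le_mul_of_nonneg_right (le_max_right _ _) hg1.le
    have h5 : b * (G₁ 1) ^ α ≤ b * (G₁ b) ^ α := mul_le_mul_of_nonneg_left h1 hbpos.le
    simp only [hψ]
    linarith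
  have hab : a ≤ b := ha1.trans hb1
  have hψcont : ContinuousOn ψ (Icc a b) := fun x _ => (hcontψ x).continuousWithinAt
  have hsub := intermediate_value_Icc hab hψcont
  have h0mem : (0:ℝ) ∈ Icc (ψ a) (ψ b) := ⟨hψa, hψb⟩
  obtain ⟨r, hrmem, hr0⟩ := hsub h0mem
  have hrpos : 0 < r := lt_of_lt_of_le hapos hrmem.1
  have key : (G₂ r) ^ α = r * (G₁ r) ^ α := by
    simp only [hψ] at hr0
    linarith
  -- the fixed point
  refine ⟨![G₁ r, G₂ r], ?_, ?_, ?_, ?_⟩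
  · simpa using hGpos₁ hrpos
  · simpa using hGpos₂ hrpos
  · simp only [Matrix.cons_val_zero, Matrix.cons_val_one, Matrix.head_cons]
    have hiff : ∀ ω, (H₂ ω / (G₂ r) ^ α ≤ H₁ ω / (G₁ r) ^ α) ↔ (H₂ ω ≤ r * H₁ ω) := by
      intro ω
      have hc : (0:ℝ) < (G₁ r) ^ α := Real.rpow_pos_of_pos (hGpos₁ hrpos) α
      rw [key, div_le_div_iff₀ (by positivity) hc,
        show H₁ ω * (r * (G₁ r) ^ α) = (r * H₁ ω) * (G₁ r) ^ α by ring]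
      exact mul_le_mul_iff_left₀ hc
    have : (fun ω => H₁ ω * (if H₂ ω / (G₂ r) ^ α ≤ H₁ ω / (G₁ r) ^ α then (1:ℝ) else 0))
        = F₁ r := by
      funext ω
      rw [hF₁]
      simp only
      rw [if_congr (hiff ω) rfl rfl]
    exact (congrArg (fun f : Ω → ℝ => ∫ ω, f ω ∂μ) this).symm
  · simp only [Matrix.cons_val_zero, Matrix.cons_val_one, Matrix.head_cons]
    have hiff : ∀ ω, (H₁ ω / (G₁ r) ^ α ≤ H₂ ω / (G₂ r) ^ α) ↔ (r * H₁ ω ≤ H₂ ω) := by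
      intro ω
      have hc : (0:ℝ) < (G₁ r) ^ α := Real.rpow_pos_of_pos (hGpos₁ hrpos) α
      rw [key, div_le_div_iff₀ hc (by positivity),
        show H₁ ω * (r * (G₁ r) ^ α) = (r * H₁ ω) * (G₁ r) ^ α by ring]
      exact mul_le_mul_iff_left₀ hc
    have : (fun ω => H₂ ω * (if H₁ ω / (G₁ r) ^ α ≤ H₂ ω / (G₂ r) ^ α then (1:ℝ) else 0))
        = F₂ r := by
      funext ω
      rw [hF₂]
      simp only
      rw [if_congr (hiff ω) rfl rfl]
    exact (congrArg (fun f : Ω → ℝ => ∫ ω, f ω ∂μ) this).symm
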